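/- Let M ≥ 1 and Δ > 0. Suppose (H_i)_{i≥0} is a decreasing sequence of finite sets with |H_i| < b_i·M for all i ≥ 1 and H₀ a set of size at most M, where b_i = b^i with the sequences from the peeling construction (a_i = d·a^i, d = 14·((1-b)/(√a-b))², 0 < a < b < √a < 1). Suppose each element m of H_{i-1} \ H_i is assigned a weight w_m ≤ 3·√(3/2)·Δ/(M·√(a_i)). Then the total weight ∑_m w_m over H₀ satisfies ∑_m w_m < √14·∑_{i=1}^∞ ((b_{i-1}-b_i)/√(a_i))·Δ ≤ Δ. -/

import Mathlib

private lemma abel_aux (A c : ℕ → ℝ) : ∀ N, ∑ i ∈ Finset.range N, (A i - A (i+1)) * c i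
    = A 0 * c 0 - A N * c N + ∑ i ∈ Finset.range N, A (i+1) * (c (i+1) - c i) := by
  intro N
  induction N with
  | zero => simp
  | succ n ih => rw [Finset.sum_range_succ, Finset.sum_range_succ, ih]; ring

theorem stmt_11 {ι : Type*} [DecidableEq ι] (M : ℕ) (hM : 1 ≤ M) (Δ : ℝ) (hΔ : 0 < Δ)
    (a b : ℝ) (ha : 0 < a) (hab : a < b) (hb : b < Real.sqrt a) (hA : Real.sqrt a < 1)
    (d : ℝ) (hd : d = 14 * ((1 - b) / (Real.sqrt a - b))^2)
    (H : ℕ → Finset ι) (hdec : ∀ i, H (i+1) ⊆ H i) (h0 : (H 0).card ≤ M)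
    (hcard : ∀ i : ℕ, 1 ≤ i → ((H i).card : ℝ) < b^i * M)
    (w : ι → ℝ)
    (hw : ∀ i : ℕ, ∀ m ∈ H i \ H (i+1),
      w m ≤ 3 * Real.sqrt (3/2) * Δ / (M * Real.sqrt (d * a^(i+1)))) :
    (∑ m ∈ H 0, w m)
        < Real.sqrt 14 * (∑' i : ℕ, (b^i - b^(i+1)) / Real.sqrt (d * a^(i+1))) * Δ ∧
    Real.sqrt 14 * (∑' i : ℕ, (b^i - b^(i+1)) / Real.sqrt (d * a^(i+1))) * Δ ≤ Δ := by
  set s := Real.sqrt a with hs_def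
  have hs0 : 0 < s := Real.sqrt_pos.mpr ha
  have hb0 : 0 < b := ha.trans hab
  have hb1 : b < 1 := hb.trans hA
  have hsb : 0 < s - b := sub_pos.mpr hb
  have h1b : 0 < 1 - b := sub_pos.mpr hb1
  have h14 : (0:ℝ) < Real.sqrt 14 := Real.sqrt_pos.mpr (by norm_num)
  have hM0 : (0:ℝ) < (M:ℝ) := by exact_mod_cast Nat.lt_of_lt_of_le Nat.zero_lt_one hM
  have hD : Real.sqrt d = Real.sqrt 14 * ((1 - b) / (s - b)) := by
    rw [hd, Real.sqrt_mul (by norm_num), Real.sqrt_sq (le_of_lt (div_pos h1b hsb))]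
  have hD0 : 0 < Real.sqrt d := by
    rw [hD]; positivity
  have hsqrt : ∀ i : ℕ, Real.sqrt (d * a^(i+1)) = Real.sqrt d * s^(i+1) := by
    intro i
    rw [Real.sqrt_mul (le_of_lt (Real.sqrt_pos.mp hD0))]
    congr 1
    have : a ^ (i+1) = (s^(i+1))^2 := by
      rw [← pow_mul, mul_comm (i+1) 2, pow_mul, Real.sq_sqrt ha.le]
    rw [this, Real.sqrt_sq (pow_nonneg hs0.le _)]
  -- the tsum equals (√14)⁻¹
  have hbs1 : b / s < 1 := (div_lt_one hs0).mpr hb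
  have htsum : (∑' i : ℕ, (b^i - b^(i+1)) / Real.sqrt (d * a^(i+1))) = (Real.sqrt 14)⁻¹ := by
    have hterm : ∀ i : ℕ, (b^i - b^(i+1)) / Real.sqrt (d * a^(i+1))
        = ((1 - b) / (Real.sqrt d * s)) * (b / s)^i := by
      intro i
      rw [hsqrt i, div_pow, pow_succ b i, pow_succ s i]
      have hsi : s ^ i ≠ 0 := (pow_pos hs0 i).ne'
      field_simp
    rw [tsum_congr hterm, tsum_mul_left,
      tsum_geometric_of_lt_one (div_nonneg hb0.le hs0.le) hbs1, hD]
    rw [show (1 : ℝ) - b / s = (s - b) / s by field_simp]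
    field_simp
  have heq : Real.sqrt 14 * (∑' i : ℕ, (b^i - b^(i+1)) / Real.sqrt (d * a^(i+1))) * Δ = Δ := by
    rw [htsum, mul_inv_cancel₀ h14.ne', one_mul]
  rw [heq]
  refine ⟨?_, le_refl Δ⟩
  -- main inequality : ∑ w < Δ
  set K : ℝ := 3 * Real.sqrt (3/2) * Δ with hK_def
  have hK0 : 0 < K := by positivity
  have hK14 : K < Real.sqrt 14 * Δ := by
    have h3 : (3:ℝ) * Real.sqrt (3/2) = Real.sqrt (27/2) := by
      rw [show (27/2 : ℝ) = 9 * (3/2) by norm_num, Real.sqrt_mul (by norm_num),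
        show (9:ℝ) = 3^2 by norm_num, Real.sqrt_sq (by norm_num)]
    rw [hK_def, h3]
    exact mul_lt_mul_of_pos_right (Real.sqrt_lt_sqrt (by norm_num) (by norm_num)) hΔ
  set c : ℕ → ℝ := fun i => K / (M * (Real.sqrt d * s^(i+1))) with hc_def
  have hc0 : ∀ i, 0 < c i := fun i => by
    apply div_pos hK0; positivity
  have hcmono : ∀ i, c i ≤ c (i+1) := by
    intro i
    apply div_le_div_of_nonneg_left hK0.le (by positivity)
    have h : s ^ (i+1+1) ≤ s ^ (i+1) :=
      pow_le_pow_of_le_one hs0.le hA.le (by omega)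
    have h2 : (0:ℝ) ≤ (M:ℝ) * Real.sqrt d := by positivity
    calc (M:ℝ) * (Real.sqrt d * s^(i+1+1)) = ((M:ℝ) * Real.sqrt d) * s^(i+1+1) := by ring
      _ ≤ ((M:ℝ) * Real.sqrt d) * s^(i+1) := mul_le_mul_of_nonneg_left h h2
      _ = (M:ℝ) * (Real.sqrt d * s^(i+1)) := by ring
  -- find N ≥ 1 with H N = ∅
  obtain ⟨N₀, hN₀⟩ := exists_pow_lt_of_lt_one (show (0:ℝ) < 1 / M by positivity) hb1
  set N := N₀ + 1 with hN_def
  have hbN : b ^ N * M < 1 := by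
    have h1 : b ^ N ≤ b ^ N₀ := pow_le_pow_of_le_one hb0.le hb1.le (by omega)
    have := mul_lt_mul_of_pos_right hN₀ hM0
    rw [div_mul_cancel₀ _ hM0.ne'] at this
    exact lt_of_le_of_lt (mul_le_mul_of_nonneg_right h1 hM0.le) this
  have hHN : H N = ∅ := by
    have h1 : ((H N).card : ℝ) < 1 := (hcard N (by omega)).trans hbN
    have : (H N).card = 0 := by exact_mod_cast Nat.lt_one_iff.mp (by exact_mod_cast h1)
    exact Finset.card_eq_zero.mp this
  -- decomposition
  have hdecomp : ∀ n : ℕ, ∑ m ∈ H 0, w m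
      = (∑ i ∈ Finset.range n, ∑ m ∈ H i \ H (i+1), w m) + ∑ m ∈ H n, w m := by
    intro n
    induction n with
    | zero => simp
    | succ k ih =>
        rw [ih, Finset.sum_range_succ, ← Finset.sum_sdiff (hdec k)]
        ring
  have hsum0 : ∑ m ∈ H 0, w m = ∑ i ∈ Finset.range N, ∑ m ∈ H i \ H (i+1), w m := by
    rw [hdecomp N, hHN]; simp
  set A : ℕ → ℝ := fun i => ((H i).card : ℝ) with hA_def
  have hA_nonneg : ∀ i, 0 ≤ A i := fun i => Nat.cast_nonneg _
  have step1 : ∑ m ∈ H 0, w m ≤ ∑ i ∈ Finset.range N, (A i - A (i+1)) * c i := by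
    rw [hsum0]
    apply Finset.sum_le_sum
    intro i _
    have hle : ∑ m ∈ H i \ H (i+1), w m ≤ (H i \ H (i+1)).card • c i := by
      apply Finset.sum_le_card_nsmul
      intro m hm
      have := hw i m hm
      rwa [hsqrt i] at this
    rw [nsmul_eq_mul] at hle
    have hcardeq : ((H i \ H (i+1)).card : ℝ) = A i - A (i+1) := by
      show ((H i \ H (i+1)).card : ℝ) = ((H i).card : ℝ) - ((H (i+1)).card : ℝ)
      rw [Finset.card_sdiff_of_subset (hdec i), Nat.cast_sub (Finset.card_le_card (hdec i))]
    rwa [hcardeq] at hle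
  have step2 : ∑ i ∈ Finset.range N, (A i - A (i+1)) * c i
      ≤ (M:ℝ) * c 0 + ∑ i ∈ Finset.range N, (b^(i+1) * M) * (c (i+1) - c i) := by
    rw [abel_aux]
    have hAN : A N = 0 := by rw [hA_def]; simp [hHN]
    rw [hAN, zero_mul, sub_zero]
    have h1 : A 0 * c 0 ≤ (M:ℝ) * c 0 :=
      mul_le_mul_of_nonneg_right (show ((H 0).card : ℝ) ≤ (M:ℝ) by exact_mod_cast h0) (hc0 0).le
    have h2 : ∑ i ∈ Finset.range N, A (i+1) * (c (i+1) - c i)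
        ≤ ∑ i ∈ Finset.range N, (b^(i+1) * M) * (c (i+1) - c i) := by
      apply Finset.sum_le_sum
      intro i _
      exact mul_le_mul_of_nonneg_right ((hcard (i+1) (by omega)).le)
        (sub_nonneg.mpr (hcmono i))
    linarith
  -- geometric bound
  have hterm2 : ∀ i : ℕ, (b^(i+1) * M) * (c (i+1) - c i)
      = (K * b * (1 - s) / (Real.sqrt d * s^2)) * (b/s)^i := by
    intro i
    rw [hc_def]
    simp only []
    rw [div_pow]
    have hsi : s ^ i ≠ 0 := (pow_pos hs0 i).ne'
    have h1 : s ^ (i+1) = s * s^i := by ring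
    have h2 : s ^ (i+1+1) = s^2 * s^i := by ring
    have h3 : b ^ (i+1) = b * b^i := by ring
    rw [h1, h2, h3]
    field_simp
  have hgeom : ∑ i ∈ Finset.range N, (b/s)^i ≤ s / (s - b) := by
    have hnn : (0:ℝ) ≤ b / s := div_nonneg hb0.le hs0.le
    calc ∑ i ∈ Finset.range N, (b/s)^i
        ≤ ∑' i : ℕ, (b/s)^i :=
          Summable.sum_le_tsum _ (fun i _ => pow_nonneg hnn i)
            (summable_geometric_of_lt_one hnn hbs1)
      _ = (1 - b/s)⁻¹ := tsum_geometric_of_lt_one hnn hbs1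
      _ = s / (s - b) := by
          rw [show (1:ℝ) - b/s = (s - b)/s by field_simp, inv_div]
  have hcoef : 0 ≤ K * b * (1 - s) / (Real.sqrt d * s^2) := by
    have h1s : 0 ≤ 1 - s := sub_nonneg.mpr hA.le
    positivity
  have step3 : ∑ i ∈ Finset.range N, (b^(i+1) * M) * (c (i+1) - c i)
      ≤ (K * b * (1 - s) / (Real.sqrt d * s^2)) * (s / (s - b)) := by
    calc ∑ i ∈ Finset.range N, (b^(i+1) * M) * (c (i+1) - c i)
        = (K * b * (1 - s) / (Real.sqrt d * s^2)) * ∑ i ∈ Finset.range N, (b/s)^i := by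
          rw [Finset.mul_sum]; exact Finset.sum_congr rfl fun i _ => hterm2 i
      _ ≤ _ := mul_le_mul_of_nonneg_left hgeom hcoef
  have hfinal : (M:ℝ) * c 0 + (K * b * (1 - s) / (Real.sqrt d * s^2)) * (s / (s - b))
      = K * (1 - b) / (Real.sqrt d * (s - b)) := by
    rw [hc_def]
    simp only []
    rw [pow_one]
    field_simp
    ring
  have hlast : K * (1 - b) / (Real.sqrt d * (s - b)) = K / Real.sqrt 14 := by
    rw [hD]
    field_simp
  have : ∑ m ∈ H 0, w m ≤ K / Real.sqrt 14 := by
    calc ∑ m ∈ H 0, w m ≤ ∑ i ∈ Finset.range N, (A i - A (i+1)) * c i := step1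
      _ ≤ (M:ℝ) * c 0 + ∑ i ∈ Finset.range N, (b^(i+1) * M) * (c (i+1) - c i) := step2
      _ ≤ (M:ℝ) * c 0 + (K * b * (1 - s) / (Real.sqrt d * s^2)) * (s / (s - b)) := by
          linarith [step3]
      _ = K / Real.sqrt 14 := by rw [hfinal, hlast]
  have hKΔ : K / Real.sqrt 14 < Δ := by
    rw [div_lt_iff₀ h14]
    linarith [hK14]
  linarith
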